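/- arXiv:1402.4277 — 2 statements merged into one kernel-verified Lean document; each statement's English description precedes it below -/
import Mathlib

section
/- Let P = (p_v)_{v ∈ V} be a compatible family of V-partitions. For any three distinct elements u, v, w ∈ V: if p_w[u] ≠ p_w[v], then w ∈ p_v[u] ∩ p_u[v]. -/
/-- A compatible family of `V`-partitions: for each `v ∈ V` a partition of `V`,
recorded via its block function `blk v u` = the block of the partition `p_v`
containing `u`, such that `p_v[u] ∪ p_u[v] = V` for all distinct `u, v`, and
`{v} ∈ p_v` for all `v`. -/
structure CompFam (V : Type*) where
  blk : V → V → Set V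
  mem_self : ∀ v u, u ∈ blk v u
  eq_of_mem : ∀ v u w, w ∈ blk v u → blk v w = blk v u
  self_blk : ∀ v, blk v v = {v}
  compat : ∀ u v : V, u ≠ v → blk v u ∪ blk u v = Set.univ

/-- The graph `B_P = (V, E_P)` associated to a compatible family `P`:
`{u,v} ∈ E_P` iff `p_w[u] = p_w[v]` for all `w ∈ V − {u,v}`. -/
def BP {V : Type*} (P : CompFam V) : SimpleGraph V where
  Adj u v := u ≠ v ∧ ∀ w, w ≠ u → w ≠ v → P.blk w u = P.blk w v
  symm := ⟨fun u v h => ⟨h.1.symm, fun w h1 h2 => (h.2 w h2 h1).symm⟩⟩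
  loopless := ⟨fun u h => h.1 rfl⟩

namespace CompFam

variable {V : Type*} (P : CompFam V)

theorem mem_blk_comm {u v w : V} : w ∈ P.blk v u ↔ u ∈ P.blk v w :=
  ⟨fun hw => P.eq_of_mem v u w hw ▸ P.mem_self v u,
    fun hu => P.eq_of_mem v w u hu ▸ P.mem_self v w⟩

theorem notMem_blk_of_blk_ne {u v w : V} (h : P.blk w u ≠ P.blk w v) : u ∉ P.blk w v :=
  fun hu => h (P.eq_of_mem w v u hu)

theorem mem_blk_of_notMem_blk {u v w : V} (hvw : v ≠ w) (hu : u ∉ P.blk w v) :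
    u ∈ P.blk v w :=
  ((P.compat w v hvw.symm).symm ▸ Set.mem_univ u : u ∈ P.blk v w ∪ P.blk w v).resolve_right hu

theorem mem_blk_of_blk_ne {u v w : V} (hvw : v ≠ w) (h : P.blk w u ≠ P.blk w v) :
    w ∈ P.blk v u :=
  P.mem_blk_comm.2 (P.mem_blk_of_notMem_blk hvw (P.notMem_blk_of_blk_ne h))

end CompFam

theorem mem_inter_of_sep_general {V : Type*} (P : CompFam V) (u v w : V)
    (huw : u ≠ w) (hvw : v ≠ w)
    (h : P.blk w u ≠ P.blk w v) :
    w ∈ P.blk v u ∩ P.blk u v :=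
  ⟨P.mem_blk_of_blk_ne hvw h, P.mem_blk_of_blk_ne huw h.symm⟩

theorem mem_inter_of_sep {V : Type*} [Fintype V] (P : CompFam V) (u v w : V)
    (huv : u ≠ v) (huw : u ≠ w) (hvw : v ≠ w)
    (h : P.blk w u ≠ P.blk w v) :
    w ∈ P.blk v u ∩ P.blk u v :=
  mem_inter_of_sep_general P u v w huw hvw h
end

section
/- For every compatible family P = (p_v)_{v ∈ V} of V-partitions and every v ∈ V, the set of connected components of the graph B_P^(v) (obtained from B_P by deleting all edges incident to v) is exactly the partition p_v; that is, for all distinct u, v ∈ V, the connected component of u in B_P^(v) equals p_v[u]. -/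
/-- The graph obtained from `G` by deleting all edges incident to `v`. -/
def delV {V : Type*} (G : SimpleGraph V) (v : V) : SimpleGraph V where
  Adj a b := G.Adj a b ∧ a ≠ v ∧ b ≠ v
  symm := ⟨fun a b h => ⟨h.1.symm, h.2.2, h.2.1⟩⟩
  loopless := ⟨fun a h => G.loopless.irrefl a h.1⟩

namespace CompFam

variable {V : Type*} (P : CompFam V) {a b v w x : V}

theorem blk_eq_iff_mem : P.blk w a = P.blk w b ↔ b ∈ P.blk w a :=
  ⟨fun h => h ▸ P.mem_self w b, fun h => (P.eq_of_mem w a b h).symm⟩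

theorem mem_blk_comm_s17 : b ∈ P.blk w a ↔ a ∈ P.blk w b := by
  rw [← blk_eq_iff_mem, ← blk_eq_iff_mem, eq_comm]

theorem mem_blk_of_notMem (hab : a ≠ b) (hx : x ∉ P.blk b a) : x ∈ P.blk a b :=
  (P.compat a b hab ▸ Set.mem_univ x : x ∈ P.blk b a ∪ P.blk a b).resolve_left hx

theorem notMem_blk_self (hav : a ≠ v) : v ∉ P.blk v a := by
  rw [mem_blk_comm_s17, P.self_blk]
  exact hav

theorem blk_eq_blk_of_notMem (hwv : w ≠ v) (hw : w ∉ P.blk v a) : P.blk w a = P.blk w v :=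
  ((P.blk_eq_iff_mem).2 (P.mem_blk_of_notMem hwv (by rwa [mem_blk_comm_s17]))).symm

theorem mem_blk_of_separates (hwv : w ≠ v) (hb : b ∈ P.blk v a)
    (hsep : P.blk w a ≠ P.blk w b) : w ∈ P.blk v a := by
  by_contra hw
  have hwb : w ∉ P.blk v b := by rwa [P.eq_of_mem v a b hb]
  exact hsep ((P.blk_eq_blk_of_notMem hwv hw).trans (P.blk_eq_blk_of_notMem hwv hwb).symm)

def mutualBlk (a b : V) : Set V := P.blk a b ∩ P.blk b a

theorem mutualBlk_comm (a b : V) : P.mutualBlk a b = P.mutualBlk b a :=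
  Set.inter_comm _ _

theorem mutualBlk_ssubset (hwa : w ≠ a) (hwb : w ≠ b) (hsep : P.blk w a ≠ P.blk w b) :
    P.mutualBlk a w ⊂ P.mutualBlk a b := by
  have hab : P.blk a b = P.blk a w :=
    P.eq_of_mem a w b (P.mem_blk_of_notMem hwa.symm fun h => hsep ((P.blk_eq_iff_mem).2 h))
  have hba : P.blk b a = P.blk b w :=
    P.eq_of_mem b w a (P.mem_blk_of_notMem hwb.symm fun h => hsep ((P.blk_eq_iff_mem).2 h).symm)
  refine Set.ssubset_iff_of_subset ?_ |>.2 ⟨w, ?_, fun hw => P.notMem_blk_self hwa.symm hw.2⟩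
  · rintro x ⟨hxa, hxw⟩
    refine ⟨hab ▸ hxa, hba ▸ P.mem_blk_of_notMem hwb.symm fun hx => hsep ?_⟩
    exact (P.eq_of_mem w a x hxw).symm.trans (P.eq_of_mem w b x hx)
  · exact ⟨hab ▸ P.mem_self a w, hba ▸ P.mem_self b w⟩

theorem blk_eq_of_reachable (h : (delV (BP P) v).Reachable a b) : P.blk v b = P.blk v a := by
  obtain ⟨p⟩ := h
  induction p with
  | nil => rfl
  | cons hadj _ ih => exact ih.trans (hadj.1.2 v hadj.2.1.symm hadj.2.2.symm).symm

theorem reachable_of_mem_blk [Finite V] (hav : a ≠ v) (hb : b ∈ P.blk v a) :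
    (delV (BP P) v).Reachable a b := by
  obtain ⟨S, hS⟩ : ∃ S, P.mutualBlk a b = S := ⟨_, rfl⟩
  induction S using WellFoundedLT.induction generalizing a b with
  | ind S ih =>
    have hbv : b ≠ v := fun h => P.notMem_blk_self hav (h ▸ hb)
    by_cases hadj : (BP P).Adj a b
    · exact SimpleGraph.Adj.reachable ⟨hadj, hav, hbv⟩
    by_cases hab : a = b
    · exact hab ▸ SimpleGraph.Reachable.refl a
    obtain ⟨w, hwa, hwb, hsep⟩ : ∃ w, w ≠ a ∧ w ≠ b ∧ P.blk w a ≠ P.blk w b := by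
      simpa [BP, hab] using hadj
    have hwv : w ≠ v := fun h => hsep (h ▸ P.eq_of_mem v a b hb).symm
    have hw : w ∈ P.blk v a := P.mem_blk_of_separates hwv hb hsep
    have hreach_aw : (delV (BP P) v).Reachable a w :=
      ih _ (hS ▸ P.mutualBlk_ssubset hwa hwb hsep) hav hw rfl
    have hreach_wb : (delV (BP P) v).Reachable w b := by
      refine ih _ ?_ hwv (P.eq_of_mem v a w hw ▸ hb) rfl
      rw [← hS, P.mutualBlk_comm w, P.mutualBlk_comm a]
      exact P.mutualBlk_ssubset hwb hwa (Ne.symm hsep)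
    exact hreach_aw.trans hreach_wb

end CompFam

theorem components_of_BP_delete {V : Type*} [Fintype V] (P : CompFam V) :
    ∀ u v : V, u ≠ v → {x | (delV (BP P) v).Reachable u x} = P.blk v u := by
  intro u v huv
  ext x
  exact ⟨fun h => P.blk_eq_of_reachable h ▸ P.mem_self v x, P.reachable_of_mem_blk huv⟩
end
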